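/- arXiv:2402.01250 — 4 statements merged into one kernel-verified Lean document; each statement's English description precedes it below -/
import Mathlib

section
/- Let (R,μ) be a σ-finite measure space, let X be a quasi-Banach space, and let Y ⊆ M₀(R,μ) be a quasi-Köthe function space whose quasinorm ‖·‖_Y is absolutely continuous and uniformly separating. Let T : X → Y be a bounded positively homogeneous operator and let λ > 0. If there is a sequence {x_j}_{j=1}^∞ in the closed unit ball B_X of X such that the supports of Tx_j vanish (i.e., the indicator functions of spt Tx_j = {x ∈ R : (Tx_j)(x) ≠ 0} converge to 0 μ-a.e. as j → ∞) and ‖Tx_j‖_Y ≥ λ for every j, then the ball measure of noncompactness satisfies β(T : X → Y) ≥ λ. -/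
open MeasureTheory Filter Topology

/-- Lower bound on the ball measure of noncompactness: if `T` is a
bounded positively homogeneous operator from a quasi-Banach space `X` into a
quasi-Köthe function space `Y ⊆ M₀(R,μ)` with absolutely continuous and uniformly
separating quasinorm, and if there is a sequence `{x_j} ⊆ B_X` with
`spt T x_j → ∅` and `‖T x_j‖_Y ≥ λ`, then `β(T) ≥ λ`. -/
theorem lower_bound_ball_measure_of_noncompactness
    {R : Type*} [MeasurableSpace R] (μ : Measure R) [SigmaFinite μ]
    -- X : a quasi-Banach space
    {X : Type*} [AddCommGroup X] [Module ℝ X]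
    (NX : X → ℝ) (CX : ℝ) (hCX : 1 ≤ CX)
    (hNX_nonneg : ∀ x, 0 ≤ NX x)
    (hNX_zero : ∀ x, NX x = 0 ↔ x = 0)
    (hNX_smul : ∀ (a : ℝ) (x : X), NX (a • x) = |a| * NX x)
    (hNX_tri : ∀ x y : X, NX (x + y) ≤ CX * (NX x + NX y))
    (hX_complete : ∀ u : ℕ → X,
      (∀ ε : ℝ, 0 < ε → ∃ N, ∀ m ≥ N, ∀ n ≥ N, NX (u m - u n) < ε) →
      ∃ x : X, Tendsto (fun n => NX (u n - x)) atTop (nhds 0))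
    -- Y : a quasi-Köthe function space contained in M₀(R,μ)
    (memY : (R → ℝ) → Prop) (NY : (R → ℝ) → ℝ) (CY : ℝ) (hCY : 1 ≤ CY)
    (hY_meas : ∀ f, memY f → AEMeasurable f μ)
    (hY_add : ∀ f g, memY f → memY g → memY (f + g))
    (hY_smul : ∀ (a : ℝ) (f), memY f → memY (a • f))
    (hNY_nonneg : ∀ f, 0 ≤ NY f)
    (hNY_zero : ∀ f, memY f → (NY f = 0 ↔ f =ᵐ[μ] 0))
    (hNY_smul : ∀ (a : ℝ) (f), memY f → NY (a • f) = |a| * NY f)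
    (hNY_tri : ∀ f g, memY f → memY g → NY (f + g) ≤ CY * (NY f + NY g))
    (hY_complete : ∀ u : ℕ → (R → ℝ), (∀ n, memY (u n)) →
      (∀ ε : ℝ, 0 < ε → ∃ N, ∀ m ≥ N, ∀ n ≥ N, NY (u m - u n) < ε) →
      ∃ f, memY f ∧ Tendsto (fun n => NY (u n - f)) atTop (nhds 0))
    -- Y is a quasi-Banach lattice
    (hY_lattice : ∀ f g, AEMeasurable f μ → memY g →
      (∀ᵐ x ∂μ, |f x| ≤ |g x|) → memY f ∧ NY f ≤ NY g)
    -- Y is a quasi-Köthe function space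
    (hY_Kothe : ∀ f, memY f → ∀ E : Set R, MeasurableSet E → μ E < ⊤ →
      memY (E.indicator (fun _ => (1 : ℝ))) ∧ Integrable (E.indicator f) μ)
    -- the quasinorm of Y is absolutely continuous
    (hY_ac : ∀ f, memY f → ∀ E : ℕ → Set R, (∀ n, MeasurableSet (E n)) →
      (∀ᵐ x ∂μ, Tendsto (fun n => (E n).indicator (fun _ => (1 : ℝ)) x) atTop (nhds 0)) →
      Tendsto (fun n => NY ((E n).indicator f)) atTop (nhds 0))
    -- the quasinorm of Y is uniformly separating
    (hY_us : ∀ r ρ : ℝ, 0 < r → r < ρ → ∃ ε : ℝ, 0 < ε ∧ ∀ f g, memY f → memY g →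
      ρ ≤ NY f → NY g ≤ r → ε ≤ NY (f + g))
    -- T : X → Y bounded and positively homogeneous
    (T : X → (R → ℝ))
    (hT_mem : ∀ x, memY (T x))
    (hT_bdd : ∃ M : ℝ, ∀ x, NY (T x) ≤ M * NX x)
    (hT_hom : ∀ a : ℝ, 0 < a → ∀ x, NY (T (a • x)) = a * NY (T x))
    -- the sequence in the unit ball of X
    (lam : ℝ) (hlam : 0 < lam)
    (u : ℕ → X) (hu : ∀ j, NX (u j) ≤ 1)
    (h_spt : ∀ᵐ x ∂μ, Tendsto
      (fun j => ({y | T (u j) y ≠ 0}).indicator (fun _ => (1 : ℝ)) x) atTop (nhds 0))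
    (h_low : ∀ j, lam ≤ NY (T (u j))) :
    lam ≤ sInf {ρ : ℝ | 0 < ρ ∧ ∃ (m : ℕ) (y : Fin m → R → ℝ), (∀ j, memY (y j)) ∧
      ∀ x : X, NX x ≤ 1 → ∃ j, NY (T x - y j) ≤ ρ} := by
  obtain ⟨M, hM⟩ := hT_bdd
  have hmem0 : memY 0 := by
    have h := hY_smul 0 (T (u 0)) (hT_mem (u 0))
    simpa using h
  have hSne : Set.Nonempty {ρ : ℝ | 0 < ρ ∧ ∃ (m : ℕ) (y : Fin m → R → ℝ),
      (∀ j, memY (y j)) ∧ ∀ x : X, NX x ≤ 1 → ∃ j, NY (T x - y j) ≤ ρ} := by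
    refine ⟨|M| + 1, by positivity, 1, fun _ => 0, fun _ => hmem0, fun x hx => ⟨0, ?_⟩⟩
    have h1 : NY (T x) ≤ M * NX x := hM x
    have h2 : M * NX x ≤ |M| * NX x :=
      mul_le_mul_of_nonneg_right (le_abs_self M) (hNX_nonneg x)
    have h3 : |M| * NX x ≤ |M| * 1 := mul_le_mul_of_nonneg_left hx (abs_nonneg M)
    have h4 : T x - (0 : R → ℝ) = T x := sub_zero _
    rw [h4]
    linarith
  refine le_csInf hSne ?_
  rintro ρ ⟨hρpos, m, y, hymem, hnet⟩
  by_contra hcon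
  push_neg at hcon
  obtain ⟨ε, hε, hsep⟩ := hY_us ρ lam hρpos hcon
  choose k hk using fun j => hnet (u j) (hu j)
  have hmeasT : ∀ j, AEMeasurable (T (u j)) μ := fun j => hY_meas _ (hT_mem (u j))
  set φ : ℕ → R → ℝ := fun j => (hmeasT j).mk _ with hφdef
  have hφmeas : ∀ j, Measurable (φ j) := fun j => (hmeasT j).measurable_mk
  have hφae : ∀ j, T (u j) =ᵐ[μ] φ j := fun j => (hmeasT j).ae_eq_mk
  set E : ℕ → Set R := fun j => {x | φ j x ≠ 0} with hEdef
  have hEmeas : ∀ j, MeasurableSet (E j) := by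
    intro j
    have : E j = (φ j ⁻¹' {0})ᶜ := by
      ext x; simp [hEdef]
    rw [this]
    exact ((hφmeas j) (measurableSet_singleton 0)).compl
  have hconv : ∀ᵐ x ∂μ, Tendsto (fun j => (E j).indicator (fun _ => (1:ℝ)) x)
      atTop (nhds 0) := by
    have hall : ∀ᵐ x ∂μ, ∀ j, T (u j) x = φ j x := by
      rw [ae_all_iff]; exact hφae
    filter_upwards [h_spt, hall] with x hx hx2
    have heq : ∀ j, ({y | T (u j) y ≠ 0}).indicator (fun _ => (1:ℝ)) x
        = (E j).indicator (fun _ => (1:ℝ)) x := by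
      intro j
      have hiff : x ∈ {y | T (u j) y ≠ 0} ↔ x ∈ E j := by
        simp [hEdef, Set.mem_setOf_eq, hx2 j]
      by_cases hxm : x ∈ E j
      · rw [Set.indicator_of_mem hxm, Set.indicator_of_mem (hiff.mpr hxm)]
      · rw [Set.indicator_of_notMem hxm, Set.indicator_of_notMem (fun h => hxm (hiff.mp h))]
    exact Tendsto.congr heq hx
  have key : ∀ j, ε ≤ NY ((E j).indicator (y (k j))) := by
    intro j
    have hDmem : memY (T (u j) - y (k j)) := by
      have h1 := hY_smul (-1) (y (k j)) (hymem (k j))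
      rw [neg_one_smul] at h1
      have h2 := hY_add _ _ (hT_mem (u j)) h1
      simpa [sub_eq_add_neg] using h2
    have hDmeas : AEMeasurable (T (u j) - y (k j)) μ := hY_meas _ hDmem
    set g : R → ℝ := (E j).indicator (fun x => -(T (u j) x - y (k j) x)) with hg
    have hgmeas : AEMeasurable g μ := (hDmeas.neg).indicator (hEmeas j)
    have hgy : memY g ∧ NY g ≤ NY (T (u j) - y (k j)) := by
      refine hY_lattice g _ hgmeas hDmem (Filter.Eventually.of_forall fun x => ?_)
      by_cases hx : x ∈ E j
      · simp [hg, Set.indicator_of_mem hx, abs_sub_comm]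
      · simp [hg, Set.indicator_of_notMem hx]
    have hgρ : NY g ≤ ρ := hgy.2.trans (hk j)
    have hsum_ae : (T (u j) + g) =ᵐ[μ] (E j).indicator (y (k j)) := by
      filter_upwards [hφae j] with x hx
      by_cases hxE : x ∈ E j
      · simp only [Pi.add_apply, hg, Set.indicator_of_mem hxE]
        ring
      · have h0 : T (u j) x = 0 := by
          have hφ0 : φ j x = 0 := by
            by_contra hne
            exact hxE hne
          rw [hx, hφ0]
        simp [hg, Set.indicator_of_notMem hxE, h0]
    have hTg_mem : memY (T (u j) + g) := hY_add _ _ (hT_mem (u j)) hgy.1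
    have hind_meas : AEMeasurable ((E j).indicator (y (k j))) μ :=
      (hY_meas _ (hymem (k j))).indicator (hEmeas j)
    have hind_mem : memY ((E j).indicator (y (k j))) := by
      refine (hY_lattice _ (y (k j)) hind_meas (hymem (k j))
        (Filter.Eventually.of_forall fun x => ?_)).1
      by_cases hx : x ∈ E j
      · simp [Set.indicator_of_mem hx]
      · simp [Set.indicator_of_notMem hx]
    have hNYeq : NY (T (u j) + g) = NY ((E j).indicator (y (k j))) := by
      have hTg_meas : AEMeasurable (T (u j) + g) μ := (hmeasT j).add hgmeas
      have h1 := (hY_lattice (T (u j) + g) _ hTg_meas hind_mem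
        (hsum_ae.mono fun x hx => le_of_eq (congrArg abs hx))).2
      have h2 := (hY_lattice ((E j).indicator (y (k j))) _ hind_meas hTg_mem
        (hsum_ae.mono fun x hx => le_of_eq (congrArg abs hx.symm))).2
      exact le_antisymm h1 h2
    have hfin := hsep (T (u j)) g (hT_mem (u j)) hgy.1 (h_low j) hgρ
    rwa [hNYeq] at hfin
  have hsumconv : Tendsto (fun j => ∑ i : Fin m, NY ((E j).indicator (y i)))
      atTop (nhds 0) := by
    have hi : ∀ i : Fin m, Tendsto (fun j => NY ((E j).indicator (y i))) atTop (nhds 0) :=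
      fun i => hY_ac (y i) (hymem i) E hEmeas hconv
    have := tendsto_finset_sum (Finset.univ : Finset (Fin m)) (fun i _ => hi i)
    simpa using this
  have hbound : ∀ j, ε ≤ ∑ i : Fin m, NY ((E j).indicator (y i)) := fun j =>
    (key j).trans (Finset.single_le_sum (f := fun i => NY ((E j).indicator (y i)))
      (fun i _ => hNY_nonneg _) (Finset.mem_univ (k j)))
  have hle : ε ≤ 0 := ge_of_tendsto hsumconv (Filter.Eventually.of_forall hbound)
  linarith
end

section
/- Let (R,μ) be a σ-finite measure space, let X be a quasi-Banach space, and let Y ⊆ M₀(R,μ) be a quasi-Köthe function space whose quasinorm ‖·‖_Y is absolutely continuous and uniformly separating. Let T : X → Y be a bounded positively homogeneous operator with operator norm ‖T‖ = sup_{x ∈ B_X} ‖Tx‖_Y. If for every λ ∈ (0, ‖T‖) there is a sequence {x_j}_{j=1}^∞ ⊆ B_X such that the indicator functions of spt Tx_j converge to 0 μ-a.e. as j → ∞ and ‖Tx_j‖_Y ≥ λ for every j, then T is maximally noncompact, i.e., β(T : X → Y) = ‖T‖. -/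
open MeasureTheory Filter Topology

/-- Criterion for maximal noncompactness: under the same assumptions on
`X`, `Y` and `T` as in Statement 0, if for every `λ ∈ (0, ‖T‖)` there is a sequence
`{x_j} ⊆ B_X` with `spt T x_j → ∅` μ-a.e. and `‖T x_j‖_Y ≥ λ`, then `T` is maximally
noncompact: `β(T) = ‖T‖`, where `‖T‖ = sup_{x ∈ B_X} ‖T x‖_Y`. -/
theorem maximal_noncompactness_criterion
    {R : Type*} [MeasurableSpace R] (μ : Measure R) [SigmaFinite μ]
    -- X : a quasi-Banach space
    {X : Type*} [AddCommGroup X] [Module ℝ X]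
    (NX : X → ℝ) (CX : ℝ) (hCX : 1 ≤ CX)
    (hNX_nonneg : ∀ x, 0 ≤ NX x)
    (hNX_zero : ∀ x, NX x = 0 ↔ x = 0)
    (hNX_smul : ∀ (a : ℝ) (x : X), NX (a • x) = |a| * NX x)
    (hNX_tri : ∀ x y : X, NX (x + y) ≤ CX * (NX x + NX y))
    (hX_complete : ∀ u : ℕ → X,
      (∀ ε : ℝ, 0 < ε → ∃ N, ∀ m ≥ N, ∀ n ≥ N, NX (u m - u n) < ε) →
      ∃ x : X, Tendsto (fun n => NX (u n - x)) atTop (nhds 0))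
    -- Y : a quasi-Köthe function space contained in M₀(R,μ)
    (memY : (R → ℝ) → Prop) (NY : (R → ℝ) → ℝ) (CY : ℝ) (hCY : 1 ≤ CY)
    (hY_meas : ∀ f, memY f → AEMeasurable f μ)
    (hY_add : ∀ f g, memY f → memY g → memY (f + g))
    (hY_smul : ∀ (a : ℝ) (f), memY f → memY (a • f))
    (hNY_nonneg : ∀ f, 0 ≤ NY f)
    (hNY_zero : ∀ f, memY f → (NY f = 0 ↔ f =ᵐ[μ] 0))
    (hNY_smul : ∀ (a : ℝ) (f), memY f → NY (a • f) = |a| * NY f)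
    (hNY_tri : ∀ f g, memY f → memY g → NY (f + g) ≤ CY * (NY f + NY g))
    (hY_complete : ∀ u : ℕ → (R → ℝ), (∀ n, memY (u n)) →
      (∀ ε : ℝ, 0 < ε → ∃ N, ∀ m ≥ N, ∀ n ≥ N, NY (u m - u n) < ε) →
      ∃ f, memY f ∧ Tendsto (fun n => NY (u n - f)) atTop (nhds 0))
    -- Y is a quasi-Banach lattice
    (hY_lattice : ∀ f g, AEMeasurable f μ → memY g →
      (∀ᵐ x ∂μ, |f x| ≤ |g x|) → memY f ∧ NY f ≤ NY g)
    -- Y is a quasi-Köthe function space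
    (hY_Kothe : ∀ f, memY f → ∀ E : Set R, MeasurableSet E → μ E < ⊤ →
      memY (E.indicator (fun _ => (1 : ℝ))) ∧ Integrable (E.indicator f) μ)
    -- the quasinorm of Y is absolutely continuous
    (hY_ac : ∀ f, memY f → ∀ E : ℕ → Set R, (∀ n, MeasurableSet (E n)) →
      (∀ᵐ x ∂μ, Tendsto (fun n => (E n).indicator (fun _ => (1 : ℝ)) x) atTop (nhds 0)) →
      Tendsto (fun n => NY ((E n).indicator f)) atTop (nhds 0))
    -- the quasinorm of Y is uniformly separating
    (hY_us : ∀ r ρ : ℝ, 0 < r → r < ρ → ∃ ε : ℝ, 0 < ε ∧ ∀ f g, memY f → memY g →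
      ρ ≤ NY f → NY g ≤ r → ε ≤ NY (f + g))
    -- T : X → Y bounded and positively homogeneous
    (T : X → (R → ℝ))
    (hT_mem : ∀ x, memY (T x))
    (hT_bdd : ∃ M : ℝ, ∀ x, NY (T x) ≤ M * NX x)
    (hT_hom : ∀ a : ℝ, 0 < a → ∀ x, NY (T (a • x)) = a * NY (T x))
    -- the operator norm
    (opN : ℝ) (h_opN : opN = sSup ((fun x => NY (T x)) '' {x : X | NX x ≤ 1}))
    -- for every λ ∈ (0, ‖T‖) there is a suitable sequence in the unit ball of X
    (h_seq : ∀ lam : ℝ, 0 < lam → lam < opN → ∃ u : ℕ → X, (∀ j, NX (u j) ≤ 1) ∧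
      (∀ᵐ x ∂μ, Tendsto
        (fun j => ({y | T (u j) y ≠ 0}).indicator (fun _ => (1 : ℝ)) x) atTop (nhds 0)) ∧
      (∀ j, lam ≤ NY (T (u j)))) :
    sInf {ρ : ℝ | 0 < ρ ∧ ∃ (m : ℕ) (y : Fin m → R → ℝ), (∀ j, memY (y j)) ∧
      ∀ x : X, NX x ≤ 1 → ∃ j, NY (T x - y j) ≤ ρ} = opN := by

  -- Basic facts about the operator norm
  obtain ⟨M, hM⟩ := hT_bdd
  have hbddA : BddAbove ((fun x => NY (T x)) '' {x : X | NX x ≤ 1}) := by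
    refine ⟨|M|, ?_⟩
    rintro v ⟨x, hx, rfl⟩
    have h1 : NY (T x) ≤ M * NX x := hM x
    have h2 : M * NX x ≤ |M| * NX x :=
      mul_le_mul_of_nonneg_right (le_abs_self M) (hNX_nonneg x)
    have h3 : |M| * NX x ≤ |M| * 1 := mul_le_mul_of_nonneg_left hx (abs_nonneg M)
    linarith
  have hNX0 : NX 0 = 0 := (hNX_zero 0).mpr rfl
  have hNX0le : NX (0 : X) ≤ 1 := by rw [hNX0]; norm_num
  have hopN_le : ∀ x, NX x ≤ 1 → NY (T x) ≤ opN := by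
    intro x hx
    rw [h_opN]
    exact le_csSup hbddA ⟨x, hx, rfl⟩
  have hopN_nonneg : 0 ≤ opN := (hNY_nonneg (T 0)).trans (hopN_le 0 hNX0le)
  have hmemY0 : memY (0 : R → ℝ) := by
    have := hY_smul 0 (T 0) (hT_mem 0)
    simpa using this
  set S := {ρ : ℝ | 0 < ρ ∧ ∃ (m : ℕ) (y : Fin m → R → ℝ), (∀ j, memY (y j)) ∧
      ∀ x : X, NX x ≤ 1 → ∃ j, NY (T x - y j) ≤ ρ} with hS
  have hmemS : ∀ c, opN < c → c ∈ S := by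
    intro c hc
    refine ⟨lt_of_le_of_lt hopN_nonneg hc, 1, fun _ => 0, fun _ => hmemY0, ?_⟩
    intro x hx
    exact ⟨0, by rw [sub_zero]; exact (hopN_le x hx).trans hc.le⟩
  have hbddB : BddBelow S := ⟨0, fun ρ hρ => hρ.1.le⟩
  have hSne : S.Nonempty := ⟨opN + 1, hmemS _ (by linarith)⟩
  -- Hard direction: opN is a lower bound of S
  have hlow : ∀ ρ ∈ S, opN ≤ ρ := by
    rintro ρ ⟨hρ0, m, y, hy, hcov⟩
    by_contra hcon
    push_neg at hcon
    set lam := (ρ + opN) / 2 with hlam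
    have hlam0 : 0 < lam := by rw [hlam]; linarith
    have hρlam : ρ < lam := by rw [hlam]; linarith
    have hlamop : lam < opN := by rw [hlam]; linarith
    obtain ⟨ε, hε, hsep⟩ := hY_us ρ lam hρ0 hρlam
    obtain ⟨u, hu1, hu2, hu3⟩ := h_seq lam hlam0 hlamop
    -- measurable modifications of T (u j)
    have hmk : ∀ j : ℕ, ∃ g0 : R → ℝ, Measurable g0 ∧ T (u j) =ᵐ[μ] g0 := fun j =>
      ⟨_, (hY_meas _ (hT_mem (u j))).measurable_mk, (hY_meas _ (hT_mem (u j))).ae_eq_mk⟩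
    choose gj hgjmeas hgjae using hmk
    set A : ℕ → Set R := fun j => {x : R | gj j x ≠ 0} with hA
    have hAmeas : ∀ j, MeasurableSet (A j) := fun j =>
      (hgjmeas j) (measurableSet_singleton (0 : ℝ)).compl
    have hae2 : ∀ᵐ x ∂μ, Tendsto (fun j => (A j).indicator (fun _ => (1 : ℝ)) x) atTop
        (nhds 0) := by
      have hall : ∀ᵐ x ∂μ, ∀ j, T (u j) x = gj j x := ae_all_iff.mpr fun j => hgjae j
      filter_upwards [hu2, hall] with x hx hx2
      have heq : (fun j => (A j).indicator (fun _ => (1 : ℝ)) x)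
          = fun j => ({y | T (u j) y ≠ 0}).indicator (fun _ => (1 : ℝ)) x := by
        funext j
        simp only [Set.indicator_apply]
        have hiff : x ∈ A j ↔ x ∈ {y | T (u j) y ≠ 0} := by
          simp only [hA, Set.mem_setOf_eq, hx2 j]
        rw [if_congr hiff rfl rfl]
      rw [heq]; exact hx
    have hev : ∀ᶠ j in atTop, ∀ k : Fin m, NY ((A j).indicator (y k)) < ε := by
      rw [eventually_all]
      intro k
      exact (hY_ac (y k) (hy k) A hAmeas hae2).eventually (eventually_lt_nhds hε)
    obtain ⟨j, hjsmall⟩ := hev.exists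
    obtain ⟨k, hk⟩ := hcov (u j) (hu1 j)
    set g : R → ℝ := (A j).indicator (y k) - T (u j) with hg
    have hmemsub : memY (T (u j) - y k) := by
      have h1 := hY_add (T (u j)) ((-1 : ℝ) • y k) (hT_mem _) (hY_smul (-1) _ (hy k))
      have h2 : T (u j) + (-1 : ℝ) • y k = T (u j) - y k := by
        rw [neg_one_smul, ← sub_eq_add_neg]
      rwa [h2] at h1
    have hgmeas : AEMeasurable g μ :=
      ((hY_meas _ (hy k)).indicator (hAmeas j)).sub (hY_meas _ (hT_mem (u j)))
    have hbound : ∀ᵐ x ∂μ, |g x| ≤ |(T (u j) - y k) x| := by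
      filter_upwards [hgjae j] with x hx
      by_cases hxA : x ∈ A j
      · have hind : (A j).indicator (y k) x = y k x := Set.indicator_of_mem hxA _
        simp only [hg, Pi.sub_apply, hind]
        rw [abs_sub_comm]
      · have hind : (A j).indicator (y k) x = 0 := Set.indicator_of_notMem hxA _
        have hz : T (u j) x = 0 := by
          have hg0 : gj j x = 0 := by
            by_contra hne
            exact hxA hne
          rw [hx, hg0]
        simp [hg, Pi.sub_apply, hind, hz, abs_nonneg]
    obtain ⟨hgmem, hgle⟩ := hY_lattice g (T (u j) - y k) hgmeas hmemsub hbound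
    have hgρ : NY g ≤ ρ := hgle.trans hk
    have hsum : T (u j) + g = (A j).indicator (y k) := by
      rw [hg]; abel
    have hfin : ε ≤ NY ((A j).indicator (y k)) := by
      rw [← hsum]
      exact hsep (T (u j)) g (hT_mem _) hgmem (hu3 j) hgρ
    exact absurd hfin (not_le.mpr (hjsmall k))
  refine le_antisymm ?_ (le_csInf hSne hlow)
  by_contra hcon
  push_neg at hcon
  have hmid : opN < (opN + sInf S) / 2 := by linarith
  exact absurd (csInf_le hbddB (hmemS _ hmid)) (by linarith)
end

section
/- Define ‖·‖ : ℝ² → [0,∞) by ‖(x,y)‖ = 2|x| if y = 0 and ‖(x,y)‖ = |x| + |y| if y ≠ 0. Then ‖·‖ is a quasinorm on ℝ² (in particular ‖u+v‖ ≤ 2(‖u‖ + ‖v‖) for all u,v ∈ ℝ²), but ‖·‖ is not uniformly separating: with r = 3/2 and R = 2, for every δ ∈ (0,1/2) the vectors f = (1,0) and g = (−1,δ) satisfy ‖f‖ = 2 ≥ R, ‖g‖ ≤ r, and ‖f+g‖ = δ; hence there is no ε > 0 such that ‖f+g‖ ≥ ε for all f,g with ‖f‖ ≥ 2 and ‖g‖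 ≤ 3/2. -/
/-- The functional `‖(x,y)‖ = 2|x|` if `y = 0`, `|x| + |y|` otherwise,
is a quasinorm on `ℝ²` (with constant `2`) which is not uniformly separating. -/
theorem quasinorm_not_uniformly_separating (N : ℝ × ℝ → ℝ)
    (hN : ∀ x y : ℝ, N (x, y) = if y = 0 then 2 * |x| else |x| + |y|) :
    ((∀ p : ℝ × ℝ, 0 ≤ N p) ∧
     (∀ p : ℝ × ℝ, N p = 0 ↔ p = 0) ∧
     (∀ (a : ℝ) (p : ℝ × ℝ), N (a • p) = |a| * N p) ∧
     (∀ u v : ℝ × ℝ, N (u + v) ≤ 2 * (N u + N v))) ∧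
    (∀ δ : ℝ, δ ∈ Set.Ioo (0 : ℝ) (1 / 2) →
      N (1, 0) = 2 ∧ N (-1, δ) ≤ 3 / 2 ∧ N ((1, 0) + (-1, δ)) = δ) ∧
    ¬ ∃ ε : ℝ, 0 < ε ∧ ∀ f g : ℝ × ℝ, 2 ≤ N f → N g ≤ 3 / 2 → ε ≤ N (f + g) := by
  have hlow : ∀ x y : ℝ, |x| + |y| ≤ N (x, y) := by
    intro x y
    rw [hN]
    split_ifs with h
    · simp [h]; linarith [abs_nonneg x]
    · exact le_rfl
  have hup : ∀ x y : ℝ, N (x, y) ≤ 2 * (|x| + |y|) := by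
    intro x y
    rw [hN]
    split_ifs with h
    · simp [h]
    · nlinarith [abs_nonneg x, abs_nonneg y]
  refine ⟨⟨?_, ?_, ?_, ?_⟩, ?_, ?_⟩
  · rintro ⟨x, y⟩
    have := hlow x y
    have := abs_nonneg x
    have := abs_nonneg y
    linarith
  · rintro ⟨x, y⟩
    rw [hN]
    constructor
    · intro h
      split_ifs at h with hy
      · have : |x| = 0 := by linarith [abs_nonneg x]
        simp [hy, abs_eq_zero.mp this]
      · have hx := abs_nonneg x
        have hy' : |y| = 0 := by nlinarith [abs_nonneg y, abs_pos.mpr hy]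
        exact absurd (abs_eq_zero.mp hy') hy
    · intro h
      have hx : x = 0 := by simpa using congrArg Prod.fst h
      have hy : y = 0 := by simpa using congrArg Prod.snd h
      simp [hx, hy]
  · rintro a ⟨x, y⟩
    rcases eq_or_ne a 0 with ha | ha
    · simp [ha, hN]
    · have : a • (x, y) = (a * x, a * y) := rfl
      rw [this, hN, hN]
      have : a * y = 0 ↔ y = 0 := by
        constructor
        · intro h; rcases mul_eq_zero.mp h with h | h
          · exact absurd h ha
          · exact h
        · intro h; simp [h]
      split_ifs with h1 h2 h2
      · rw [abs_mul]; ring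
      · exact absurd (this.mp h1) h2
      · exact absurd (this.mpr h2) h1
      · rw [abs_mul, abs_mul]; ring
  · rintro ⟨x1, y1⟩ ⟨x2, y2⟩
    have h1 := hup (x1 + x2) (y1 + y2)
    have h2 := hlow x1 y1
    have h3 := hlow x2 y2
    have := abs_add_le x1 x2
    have := abs_add_le y1 y2
    have : N (x1 + x2, y1 + y2) ≤ 2 * (N (x1, y1) + N (x2, y2)) := by
      nlinarith [abs_add_le x1 x2, abs_add_le y1 y2]
    exact this
  · rintro δ ⟨hδ0, hδ1⟩
    have hδne : δ ≠ 0 := ne_of_gt hδ0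
    refine ⟨by simp [hN], ?_, ?_⟩
    · rw [hN]; simp [hδne]
      rw [abs_of_pos hδ0]; linarith
    · have : ((1 : ℝ), (0 : ℝ)) + (-1, δ) = (0, δ) := by norm_num
      rw [this, hN]
      simp [hδne, abs_of_pos hδ0]
  · rintro ⟨ε, hε, h⟩
    set δ := min (ε / 2) (1 / 4) with hδ
    have hδ0 : 0 < δ := by positivity
    have hδ2 : δ < 1 / 2 := lt_of_le_of_lt (min_le_right _ _) (by norm_num)
    have hδε : δ < ε := lt_of_le_of_lt (min_le_left _ _) (by linarith)
    have h1 : N (1, 0) = 2 := by simp [hN]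
    have h2 : N (-1, δ) ≤ 3 / 2 := by
      rw [hN]; simp [ne_of_gt hδ0]
      rw [abs_of_pos hδ0]; linarith
    have := h (1, 0) (-1, δ) (le_of_eq h1.symm) h2
    have he : ((1 : ℝ), (0 : ℝ)) + (-1, δ) = (0, δ) := by norm_num
    rw [he, hN] at this
    simp [ne_of_gt hδ0, abs_of_pos hδ0] at this
    linarith
end

section
/- Let M ∈ (0,∞), p,q ∈ (0,∞] with q < ∞, α < 0, and let w(t) = t^{q/p − 1} (log(2M/t))^{αq} for t ∈ (0,M) (with q/p interpreted as 0 when p = ∞). Then for every λ ∈ (0,1), Θ(λ) = sup_{t ∈ (0, λM)} w(t/λ)/(λ w(t)) = λ^{−q/p} (log 2)^{αq} (log(2/λ))^{−αq}. Consequently lim_{λ→1⁻} Θ(λ) = 1, and in particular inf_{λ ∈ (0,1)} Θ(λ) ≤ 1. -/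
open scoped ENNReal

open Real Set Filter Topology

/-!
With `s = log (2M/t)`, the quotient `w(t/λ) / (λ w(t))` equals `λ^{-q/p} ((s + log λ)/s)^{αq}`.
As `t` increases to `λM`, `s` decreases to `log (2/λ)`, so `(s + log λ)/s` decreases to
`log 2 / log (2/λ)`; the exponent `αq` being negative, the quotient increases, and its supremum is
its left limit at `λM`. The resulting formula is continuous at `λ = 1`, where it equals `1`.
-/

/-- The `q`-th power of the Lorentz–Zygmund weight `w_{p,q,α}` is the case `a = q/p`, `β = αq`.
-/
noncomputable def lorentzZygmundWeight (M a β t : ℝ) : ℝ := t ^ (a - 1) * log (2 * M / t) ^ β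

noncomputable def lorentzZygmundDilation (a β l : ℝ) : ℝ :=
  l ^ (-a) * log 2 ^ β * log (2 / l) ^ (-β)

lemma lorentzZygmundDilation_nonneg (a β : ℝ) {l : ℝ} (hl : 0 < l) (hl₂ : l ≤ 2) :
    0 ≤ lorentzZygmundDilation a β l := by
  have : 0 ≤ log (2 / l) := log_nonneg (by rwa [le_div_iff₀ hl, one_mul])
  unfold lorentzZygmundDilation
  positivity

lemma log_two_lt_log_div_add_log {M l t : ℝ} (hl : 0 < l) (ht : t ∈ Ioo 0 (l * M)) :
    log 2 < log (2 * M / t) + log l := by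
  obtain ⟨ht₀, htM⟩ := ht
  have hM : 0 < M := pos_of_mul_pos_right (ht₀.trans htM) hl.le
  rw [← log_mul (by positivity) hl.ne']
  refine log_lt_log two_pos ?_
  rw [div_mul_eq_mul_div, lt_div_iff₀ ht₀]
  nlinarith

lemma add_div_self_rpow_antitoneOn {c β : ℝ} (hc : c ≤ 0) (hβ : β ≤ 0) :
    AntitoneOn (fun s : ℝ => ((s + c) / s) ^ β) (Ioi (-c)) := by
  intro s₁ (hs₁ : -c < s₁) s₂ _ hle
  have hs₁0 : 0 < s₁ := by linarith
  refine rpow_le_rpow_of_nonpos (div_pos (by linarith) hs₁0) ?_ hβ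
  rw [div_le_div_iff₀ hs₁0 (hs₁0.trans_le hle)]
  nlinarith

lemma lorentzZygmundWeight_div_div_mul {M a β l t : ℝ} (hl : 0 < l) (hl₁ : l ≤ 1)
    (ht : t ∈ Ioo 0 (l * M)) :
    lorentzZygmundWeight M a β (t / l) / (l * lorentzZygmundWeight M a β t) =
      l ^ (-a) * ((log (2 * M / t) + log l) / log (2 * M / t)) ^ β := by
  have hlog := log_two_lt_log_div_add_log hl ht
  have hlog₂ : 0 < log 2 := log_pos one_lt_two
  have hs : 0 < log (2 * M / t) := by linarith [log_nonpos hl.le hl₁]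
  have ht₀ := ht.1
  have hM : 0 < M := pos_of_mul_pos_right (ht₀.trans ht.2) hl.le
  have harg : 2 * M / (t / l) = 2 * M / t * l := by field_simp
  have hla : l ^ a = l ^ (a - 1) * l := by
    rw [← rpow_add_one hl.ne', sub_add_cancel]
  rw [lorentzZygmundWeight, lorentzZygmundWeight, harg, log_mul (by positivity) hl.ne',
    div_rpow ht₀.le hl.le, div_rpow (by linarith) hs.le, rpow_neg hl.le, hla]
  have h1 : 0 < t ^ (a - 1) := rpow_pos_of_pos ht₀ _
  have h2 : 0 < l ^ (a - 1) := rpow_pos_of_pos hl _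
  have h3 : 0 < log (2 * M / t) ^ β := rpow_pos_of_pos hs _
  field_simp

lemma lorentzZygmundWeight_dilation_isLUB {M a β l : ℝ} (hM : 0 < M) (hβ : β ≤ 0)
    (hl : 0 < l) (hl₁ : l ≤ 1) :
    IsLUB ((fun t => lorentzZygmundWeight M a β (t / l) / (l * lorentzZygmundWeight M a β t)) ''
        Ioo 0 (l * M)) (lorentzZygmundDilation a β l) := by
  set g : ℝ → ℝ := fun t => l ^ (-a) * ((log (2 * M / t) + log l) / log (2 * M / t)) ^ β
  have hlog₂ : 0 < log 2 := log_pos one_lt_two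
  have hlog_l : log l ≤ 0 := log_nonpos hl.le hl₁
  have hlog₂l : log (2 / l) + log l = log 2 := by
    rw [← log_mul (by positivity) hl.ne', div_mul_cancel₀ _ hl.ne']
  have hlM : 2 * M / (l * M) = 2 / l := by field_simp
  rw [image_congr fun t ht => lorentzZygmundWeight_div_div_mul (a := a) (β := β) hl hl₁ ht]
  refine (isLUB_Ioo (mul_pos hl hM)).isLUB_of_tendsto (f := g) ?_
    (nonempty_Ioo.2 (by positivity)) ?_
  · intro t₁ ht₁ t₂ ht₂ hle
    have hs : ∀ t ∈ Ioo 0 (l * M), log (2 * M / t) ∈ Ioi (-log l) := fun t ht => by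
      have := log_two_lt_log_div_add_log hl ht
      simp only [mem_Ioi]; linarith
    refine mul_le_mul_of_nonneg_left ?_ (rpow_nonneg hl.le _)
    refine add_div_self_rpow_antitoneOn hlog_l hβ (hs t₂ ht₂) (hs t₁ ht₁) ?_
    exact log_le_log (by have := ht₂.1; positivity)
      (div_le_div_of_nonneg_left (by positivity) ht₁.1 hle)
  · have hlog_pos : 0 < log (2 / l) := by linarith
    have hdiv : ContinuousAt (fun t : ℝ => 2 * M / t) (l * M) :=
      continuousAt_const.div continuousAt_id (by positivity)
    have hlogarg : ContinuousAt (fun t => log (2 * M / t)) (l * M) :=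
      hdiv.log (by rw [hlM]; positivity)
    have hcont : ContinuousAt g (l * M) := by
      refine continuousAt_const.mul
        (((hlogarg.add continuousAt_const).div hlogarg ?_).rpow_const ?_)
      · rw [hlM]; exact hlog_pos.ne'
      · left; simp only [Pi.add_apply, Pi.div_apply, hlM, hlog₂l]; positivity
    have hval : g (l * M) = lorentzZygmundDilation a β l := by
      simp only [g, lorentzZygmundDilation, hlM, hlog₂l]
      rw [div_rpow hlog₂.le hlog_pos.le, rpow_neg hlog_pos.le]
      ring
    exact hval ▸ hcont.continuousWithinAt.tendsto

lemma tendsto_lorentzZygmundDilation_one (a β : ℝ) :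
    Tendsto (lorentzZygmundDilation a β) (𝓝 1) (𝓝 1) := by
  have hlog₂ : 0 < log 2 := log_pos one_lt_two
  have hcont : ContinuousAt (lorentzZygmundDilation a β) 1 := by
    refine ((continuousAt_id.rpow_const (Or.inl one_ne_zero)).mul continuousAt_const).mul
      (((continuousAt_const.div continuousAt_id one_ne_zero).log ?_).rpow_const ?_)
    · norm_num
    · left; norm_num
  simpa [lorentzZygmundDilation, ← rpow_add hlog₂] using hcont.tendsto

theorem dilation_function_LZ_weight_alpha_neg_general (M : ℝ) (hM : 0 < M)
    (q : ℝ) (hq : 0 < q) (p : ℝ≥0∞) (α : ℝ) (hα : α < 0)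
    (w : ℝ → ℝ)
    (hw : ∀ t, w t = t ^ (q / p.toReal - 1) * Real.log (2 * M / t) ^ (α * q))
    (Θ : ℝ → ℝ)
    (hΘ : ∀ l, Θ l = sSup ((fun t => w (t / l) / (l * w t)) '' Set.Ioo 0 (l * M))) :
    (∀ l ∈ Set.Ioo (0 : ℝ) 1,
        Θ l = l ^ (-(q / p.toReal)) * Real.log 2 ^ (α * q) * Real.log (2 / l) ^ (-(α * q))) ∧
    Filter.Tendsto Θ (nhdsWithin 1 (Set.Iio 1)) (nhds 1) ∧
    sInf (Θ '' Set.Ioo 0 1) ≤ 1 := by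
  have hw' : w = lorentzZygmundWeight M (q / p.toReal) (α * q) := funext hw
  have hΘ_eq : ∀ l ∈ Ioo (0 : ℝ) 1,
      Θ l = lorentzZygmundDilation (q / p.toReal) (α * q) l := by
    rintro l ⟨hl, hl₁⟩
    rw [hΘ, hw']
    exact (lorentzZygmundWeight_dilation_isLUB hM (mul_neg_of_neg_of_pos hα hq).le hl
      hl₁.le).csSup_eq ((nonempty_Ioo.2 (mul_pos hl hM)).image _)
  have hlim : Tendsto Θ (𝓝[<] 1) (𝓝 1) :=
    ((tendsto_lorentzZygmundDilation_one _ _).mono_left nhdsWithin_le_nhds).congr'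
      (eventually_of_mem (Ioo_mem_nhdsLT one_pos) fun l hl => (hΘ_eq l hl).symm)
  have hbdd : BddBelow (Θ '' Ioo 0 1) := ⟨0, by
    rintro _ ⟨l, hl, rfl⟩
    exact hΘ_eq l hl ▸ lorentzZygmundDilation_nonneg _ _ hl.1 (by linarith [hl.2])⟩
  exact ⟨hΘ_eq, hlim, ge_of_tendsto hlim (eventually_of_mem (Ioo_mem_nhdsLT one_pos)
    fun l hl => csInf_le hbdd (mem_image_of_mem Θ hl))⟩

/-- For the (q-th power of the) Lorentz–Zygmund weight
`w(t) = t^{q/p - 1} (log(2M/t))^{αq}` with `α < 0` (and `q/p = 0` when `p = ∞`),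
the dilation function satisfies
`Θ(λ) = λ^{-q/p} (log 2)^{αq} (log(2/λ))^{-αq}`, `Θ(λ) → 1` as `λ → 1⁻`, and
`inf_{λ∈(0,1)} Θ(λ) ≤ 1`. -/
theorem dilation_function_LZ_weight_alpha_neg (M : ℝ) (hM : 0 < M)
    (q : ℝ) (hq : 0 < q) (p : ℝ≥0∞) (hp : 0 < p) (α : ℝ) (hα : α < 0)
    (w : ℝ → ℝ)
    (hw : ∀ t, w t = t ^ (q / p.toReal - 1) * Real.log (2 * M / t) ^ (α * q))
    (Θ : ℝ → ℝ)
    (hΘ : ∀ l, Θ l = sSup ((fun t => w (t / l) / (l * w t)) '' Set.Ioo 0 (l * M))) :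
    (∀ l ∈ Set.Ioo (0 : ℝ) 1,
        Θ l = l ^ (-(q / p.toReal)) * Real.log 2 ^ (α * q) * Real.log (2 / l) ^ (-(α * q))) ∧
    Filter.Tendsto Θ (nhdsWithin 1 (Set.Iio 1)) (nhds 1) ∧
    sInf (Θ '' Set.Ioo 0 1) ≤ 1 :=
  dilation_function_LZ_weight_alpha_neg_general M hM q hq p α hα w hw Θ hΘ
end
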